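/- arXiv:1605.04638 — 2 statements merged into one kernel-verified Lean document; each statement's English description precedes it below -/
import Mathlib

section
/- Let Ω ⊆ ℝ^d be a convex set, η > 0, and let w_{t+1} = Π_Ω[w_t - η g_t] be the Euclidean projection of w_t - η g_t onto Ω. Suppose w_t*, w_{t+1}* ∈ Ω and ‖w_{t+1} - w_{t+1}*‖ ≤ r. Then g_t · (w_t - w_t*) ≤ (η/2)‖g_t‖² + (r/η)‖w_t* - w_{t+1}*‖ + (1/(2η))(‖w_t - w_t*‖² - ‖w_{t+1} - w_{t+1}*‖² - ‖w_t* - w_{t+1}*‖²). -/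
open scoped RealInnerProductSpace

/-!
Expanding `‖(w_t - η g) - w_t*‖²` turns the nonexpansiveness of the projection at `w_t*` into
`2η ⟪g, w_t - w_t*⟫ ≤ η² ‖g‖² + ‖w_t - w_t*‖² - ‖w_{t+1} - w_t*‖²`. The reverse triangle
inequality through `w_{t+1}*` bounds `‖w_{t+1} - w_t*‖²` from below by
`‖w_{t+1} - w_{t+1}*‖² + ‖w_t* - w_{t+1}*‖² - 2r ‖w_t* - w_{t+1}*‖`; dividing by `2η` concludes.
-/

theorem sq_norm_sub_sub_two_mul_le_sq_norm_sub {E : Type*} [SeminormedAddCommGroup E]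
    {p y z : E} {r : ℝ} (h : ‖p - z‖ ≤ r) :
    ‖p - z‖ ^ 2 + ‖y - z‖ ^ 2 - 2 * r * ‖y - z‖ ≤ ‖p - y‖ ^ 2 := by
  have hrev : (‖p - z‖ - ‖y - z‖) ^ 2 ≤ ‖p - y‖ ^ 2 := by
    rw [sq_le_sq, abs_norm, ← sub_sub_sub_cancel_right p y z]
    exact abs_norm_sub_norm_le (p - z) (y - z)
  linarith [mul_le_mul_of_nonneg_right h (norm_nonneg (y - z))]

theorem two_mul_inner_le_of_norm_sub_le {E : Type*} [NormedAddCommGroup E] [InnerProductSpace ℝ E]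
    {x p g y : E} {η : ℝ} (h : ‖p - y‖ ≤ ‖(x - η • g) - y‖) :
    2 * η * ⟪g, x - y⟫ ≤ η ^ 2 * ‖g‖ ^ 2 + ‖x - y‖ ^ 2 - ‖p - y‖ ^ 2 := by
  have hexpand : ‖(x - η • g) - y‖ ^ 2 = ‖x - y‖ ^ 2 - 2 * η * ⟪g, x - y⟫ + η ^ 2 * ‖g‖ ^ 2 := by
    rw [show (x - η • g) - y = (x - y) - η • g by abel, norm_sub_sq_real, real_inner_smul_right,
      real_inner_comm, norm_smul, Real.norm_eq_abs, mul_pow, sq_abs]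
    ring
  linarith [pow_le_pow_left₀ (norm_nonneg _) h 2]

theorem stmt0_general {d : ℕ} (Ω : Set (EuclideanSpace ℝ (Fin d)))
    (η r : ℝ) (hη : 0 < η)
    (wt wt1 wts wt1s g : EuclideanSpace ℝ (Fin d))
    (hwts : wts ∈ Ω)
    (hproj : ∀ y ∈ Ω, ‖wt1 - y‖ ≤ ‖(wt - η • g) - y‖)
    (hr : ‖wt1 - wt1s‖ ≤ r) :
    (inner ℝ g (wt - wts) : ℝ) ≤ η / 2 * ‖g‖ ^ 2 + r / η * ‖wts - wt1s‖
      + (1 / (2 * η)) * (‖wt - wts‖ ^ 2 - ‖wt1 - wt1s‖ ^ 2 - ‖wts - wt1s‖ ^ 2) := by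
  have hstep := two_mul_inner_le_of_norm_sub_le (hproj wts hwts)
  have hdrift := sq_norm_sub_sub_two_mul_le_sq_norm_sub (y := wts) hr
  have hscaled : 2 * η * ⟪g, wt - wts⟫ ≤ 2 * η * (η / 2 * ‖g‖ ^ 2 + r / η * ‖wts - wt1s‖
      + (1 / (2 * η)) * (‖wt - wts‖ ^ 2 - ‖wt1 - wt1s‖ ^ 2 - ‖wts - wt1s‖ ^ 2)) := by
    calc 2 * η * ⟪g, wt - wts⟫ ≤ η ^ 2 * ‖g‖ ^ 2 + 2 * r * ‖wts - wt1s‖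
          + (‖wt - wts‖ ^ 2 - ‖wt1 - wt1s‖ ^ 2 - ‖wts - wt1s‖ ^ 2) := by linarith
      _ = _ := by field_simp
  exact le_of_mul_le_mul_left hscaled (by positivity)

/-- Lemma 1 of the paper: one-step OGD inequality. -/
theorem stmt0 {d : ℕ} (Ω : Set (EuclideanSpace ℝ (Fin d)))
    (hΩconv : Convex ℝ Ω) (hΩclosed : IsClosed Ω) (hΩne : Ω.Nonempty)
    (η r : ℝ) (hη : 0 < η)
    (wt wt1 wts wt1s g : EuclideanSpace ℝ (Fin d))
    (hwt : wt ∈ Ω) (hwt1 : wt1 ∈ Ω) (hwts : wts ∈ Ω) (hwt1s : wt1s ∈ Ω)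
    (hproj : ∀ y ∈ Ω, ‖wt1 - y‖ ≤ ‖(wt - η • g) - y‖)
    (hr : ‖wt1 - wt1s‖ ≤ r) :
    (inner ℝ g (wt - wts) : ℝ) ≤ η / 2 * ‖g‖ ^ 2 + r / η * ‖wts - wt1s‖
      + (1 / (2 * η)) * (‖wt - wts‖ ^ 2 - ‖wt1 - wt1s‖ ^ 2 - ‖wts - wt1s‖ ^ 2) :=
  stmt0_general Ω η r hη wt wt1 wts wt1s g hwts hproj hr
end

section
/- Let Ω ⊆ ℝ^d be a nonempty closed convex set with the property that ‖w - w'‖ ≤ r for all w, w' ∈ Ω. Let f_1, ..., f_T : ℝ^d → ℝ be convex, differentiable, and L-smooth functions such that for each t there exists a minimizer w_t* ∈ Ω of f_t over Ω with ∇f_t(w_t*) = 0. Consider online gradient descent with constant step size η = 1/(2L): w_1 ∈ Ω arbitrary and w_{t+1} = Π_Ω[w_t - η ∇f_t(w_t)]. Then Σ_{t=1}^T (f_t(w_t) - f_t(w_t*)) ≤ 2L(r² + 2r·V_T^p), where V_T^p = Σ_{t=1}^{T-1} ‖w_t* - w_{t+1}*‖ is the path variation. -/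
/-!
Fix a round `t`, write `u = w_t*` and `p = w_t - ∇f_t(w_t)/(2L)`. Since `∇f_t(u) = 0`, `u` is a
global minimiser of `f_t`, and one step of gradient descent of length `1/L` from `w_t` gives the
smoothness bound `‖∇f_t(w_t)‖² ≤ 2L (f_t(w_t) - f_t(u))`. Together with the gradient inequality
`f_t(w_t) - f_t(u) ≤ ⟪∇f_t(w_t), w_t - u⟫` this yields
`‖p - u‖² ≤ ‖w_t - u‖² - (f_t(w_t) - f_t(u))/(2L)`, and projecting `p` onto `Ω ∋ u` only decreases
the distance to `u`. Hence `f_t(w_t) - f_t(w_t*) ≤ 2L (‖w_t - w_t*‖² - ‖w_{t+1} - w_t*‖²)`.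

Summing over `t`, the right-hand sides telescope except for the first term `‖w_1 - w_1*‖² ≤ r²`
and the mismatches `‖w_{t+1} - w_{t+1}*‖² - ‖w_{t+1} - w_t*‖²`, each at most
`2r ‖w_t* - w_{t+1}*‖` because all distances involved are at most `r`.
-/

open scoped RealInnerProductSpace

theorem sq_norm_sub_sub_sq_norm_sub_le {E : Type*} [SeminormedAddCommGroup E] {a b c : E} {r : ℝ}
    (hb : ‖a - b‖ ≤ r) (hc : ‖a - c‖ ≤ r) :
    ‖a - b‖ ^ 2 - ‖a - c‖ ^ 2 ≤ 2 * r * ‖c - b‖ := by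
  have hdiff : ‖a - b‖ - ‖a - c‖ ≤ ‖c - b‖ := by
    simpa using norm_sub_norm_le (a - b) (a - c)
  nlinarith [norm_nonneg (a - b), norm_nonneg (a - c), norm_nonneg (c - b)]

theorem Finset.sum_Icc_sub_eq (b c : ℕ → ℝ) {n : ℕ} (hn : 1 ≤ n) :
    ∑ t ∈ Icc 1 n, (b t - c t) = b 1 - c n + ∑ t ∈ Icc 1 (n - 1), (b (t + 1) - c t) := by
  induction n, hn using Nat.le_induction with
  | base => simp
  | succ n hn ih =>
    obtain ⟨m, rfl⟩ := Nat.exists_eq_add_of_le' hn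
    rw [sum_Icc_succ_top (by omega), ih, Nat.add_sub_cancel, Nat.add_sub_cancel,
      sum_Icc_succ_top (by omega)]
    ring

section InnerProductSpace

open Set AffineMap

variable {E : Type*} [NormedAddCommGroup E] [InnerProductSpace ℝ E]

theorem sq_norm_sub_add_sq_norm_sub_le_of_isMinOn {Ω : Set E} (hΩ : Convex ℝ Ω) {p y u : E}
    (hy : y ∈ Ω) (hmin : IsMinOn (‖· - p‖) Ω y) (hu : u ∈ Ω) :
    ‖y - u‖ ^ 2 + ‖p - y‖ ^ 2 ≤ ‖p - u‖ ^ 2 := by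
  have hinf : ‖p - y‖ = ⨅ q : Ω, ‖p - q‖ := by
    have : Nonempty Ω := ⟨⟨y, hy⟩⟩
    refine le_antisymm (le_ciInf fun q => ?_) (ciInf_le ⟨0, ?_⟩ (⟨y, hy⟩ : Ω))
    · simpa only [norm_sub_rev p] using isMinOn_iff.1 hmin q q.2
    · rintro _ ⟨q, rfl⟩
      exact norm_nonneg _
  have hvar := (norm_eq_iInf_iff_real_inner_le_zero hΩ hy).1 hinf u hu
  have hsplit : p - u = (p - y) - (u - y) := by abel
  rw [hsplit, norm_sub_sq_real (p - y), norm_sub_rev y u]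
  linarith

variable [CompleteSpace E] {f : E → ℝ}

theorem HasGradientAt.hasDerivAt_comp_lineMap {g x y : E} {s : ℝ}
    (h : HasGradientAt f g (lineMap x y s)) :
    HasDerivAt (f ∘ lineMap x y) ⟪g, y - x⟫ s := by
  simpa using h.hasFDerivAt.comp_hasDerivAt s hasDerivAt_lineMap

theorem ConvexOn.add_inner_le_of_hasGradientAt (hf : ConvexOn ℝ univ f) {g x : E}
    (hg : HasGradientAt f g x) (y : E) : f x + ⟪g, y - x⟫ ≤ f y := by
  have hline : ConvexOn ℝ univ (f ∘ lineMap x y) := hf.comp_affineMap (lineMap x y)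
  have := hline.le_slope_of_hasDerivAt (mem_univ 0) (mem_univ 1) zero_lt_one
    (HasGradientAt.hasDerivAt_comp_lineMap (by simpa using hg))
  simp only [slope_def_field, Function.comp_apply, lineMap_apply_one, lineMap_apply_zero, sub_zero,
    div_one] at this
  linarith

theorem le_add_inner_add_of_lipschitz_gradient {g : E → E} {L : ℝ}
    (hg : ∀ x, HasGradientAt f (g x) x) (hlip : ∀ x y, ‖g x - g y‖ ≤ L * ‖x - y‖) (x z : E) :
    f z ≤ f x + ⟪g x, z - x⟫ + L / 2 * ‖z - x‖ ^ 2 := by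
  let ψ : ℝ → ℝ := fun s => f (lineMap x z s) - s * ⟪g x, z - x⟫ - L / 2 * ‖z - x‖ ^ 2 * s ^ 2
  have hψ : ∀ s, HasDerivAt ψ (⟪g (lineMap x z s) - g x, z - x⟫ - L * ‖z - x‖ ^ 2 * s) s := by
    intro s
    have := (((hg (lineMap x z s)).hasDerivAt_comp_lineMap).sub
      ((hasDerivAt_id s).mul_const ⟪g x, z - x⟫)).sub
      ((hasDerivAt_pow 2 s).const_mul (L / 2 * ‖z - x‖ ^ 2))
    exact this.congr_deriv (by rw [inner_sub_left]; ring)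
  have hψ_nonpos : ∀ s ∈ interior (Icc (0 : ℝ) 1),
      ⟪g (lineMap x z s) - g x, z - x⟫ - L * ‖z - x‖ ^ 2 * s ≤ 0 := by
    intro s hs
    rw [interior_Icc] at hs
    rw [sub_nonpos]
    have hdist : ‖lineMap x z s - x‖ = s * ‖z - x‖ := by
      rw [lineMap_apply_module', add_sub_cancel_right, norm_smul, Real.norm_of_nonneg hs.1.le]
    calc ⟪g (lineMap x z s) - g x, z - x⟫ ≤ ‖g (lineMap x z s) - g x‖ * ‖z - x‖ :=
          real_inner_le_norm _ _
      _ ≤ L * ‖lineMap x z s - x‖ * ‖z - x‖ := by gcongr; exact hlip _ _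
      _ = L * ‖z - x‖ ^ 2 * s := by rw [hdist]; ring
  have hanti : AntitoneOn ψ (Icc 0 1) :=
    antitoneOn_of_hasDerivWithinAt_nonpos (convex_Icc 0 1)
      (fun s _ => (hψ s).continuousAt.continuousWithinAt)
      (fun s _ => (hψ s).hasDerivWithinAt) hψ_nonpos
  have h10 : ψ 1 ≤ ψ 0 :=
    hanti (left_mem_Icc.2 zero_le_one) (right_mem_Icc.2 zero_le_one) zero_le_one
  simp only [ψ, lineMap_apply_one, lineMap_apply_zero] at h10
  linarith

theorem sq_norm_le_of_lipschitz_gradient {g : E → E} {L : ℝ} (hL : 0 < L)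
    (hg : ∀ x, HasGradientAt f (g x) x) (hlip : ∀ x y, ‖g x - g y‖ ≤ L * ‖x - y‖)
    {u : E} (hu : ∀ z, f u ≤ f z) (x : E) :
    ‖g x‖ ^ 2 ≤ 2 * L * (f x - f u) := by
  have hdesc := le_add_inner_add_of_lipschitz_gradient hg hlip x (x - L⁻¹ • g x)
  rw [sub_sub_cancel_left, inner_neg_right, real_inner_smul_right, real_inner_self_eq_norm_sq,
    norm_neg, norm_smul, Real.norm_of_nonneg (inv_nonneg.2 hL.le)] at hdesc
  have key : f u ≤ f x - ‖g x‖ ^ 2 / (2 * L) := by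
    calc f u ≤ f (x - L⁻¹ • g x) := hu _
      _ ≤ _ := hdesc
      _ = f x - ‖g x‖ ^ 2 / (2 * L) := by field_simp; ring
  rw [le_sub_comm, div_le_iff₀ (by positivity)] at key
  linarith

theorem sub_le_of_projected_gradient_step {g : E → E} {L : ℝ} (hL : 0 < L)
    (hg : ∀ x, HasGradientAt f (g x) x) (hf : ConvexOn ℝ univ f)
    (hlip : ∀ x y, ‖g x - g y‖ ≤ L * ‖x - y‖) {Ω : Set E} (hΩ : Convex ℝ Ω) {u x y : E}
    (hu : u ∈ Ω) (hgu : g u = 0) (hy : y ∈ Ω)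
    (hproj : IsMinOn (‖· - (x - (1 / (2 * L)) • g x)‖) Ω y) :
    f x - f u ≤ 2 * L * (‖x - u‖ ^ 2 - ‖y - u‖ ^ 2) := by
  have hconv : f x - f u ≤ ⟪g x, x - u⟫ := by
    have := hf.add_inner_le_of_hasGradientAt (hg x) u
    rw [← neg_sub x u, inner_neg_right] at this
    linarith
  have hgrad : ‖g x‖ ^ 2 ≤ 2 * L * (f x - f u) := by
    refine sq_norm_le_of_lipschitz_gradient hL hg hlip (fun z => ?_) x
    simpa [hgu] using hf.add_inner_le_of_hasGradientAt (hg u) z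
  have hstep : 4 * L ^ 2 * ‖(x - (1 / (2 * L)) • g x) - u‖ ^ 2
      = 4 * L ^ 2 * ‖x - u‖ ^ 2 - 4 * L * ⟪g x, x - u⟫ + ‖g x‖ ^ 2 := by
    rw [sub_right_comm, norm_sub_sq_real, real_inner_smul_right, norm_smul, real_inner_comm,
      Real.norm_of_nonneg (by positivity)]
    field_simp
    ring
  have hproj_le := mul_le_mul_of_nonneg_left
    (sq_norm_sub_add_sq_norm_sub_le_of_isMinOn hΩ hy hproj hu) (by positivity : 0 ≤ 4 * L ^ 2)
  rw [mul_add, hstep] at hproj_le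
  have h2L : 0 < 2 * L := by positivity
  refine le_of_mul_le_mul_left ?_ h2L
  nlinarith [mul_le_mul_of_nonneg_left hconv hL.le, sq_nonneg ‖x - (1 / (2 * L)) • g x - y‖]

end InnerProductSpace

open Finset

theorem stmt3_general {d : ℕ} (Ω : Set (EuclideanSpace ℝ (Fin d)))
    (hΩconv : Convex ℝ Ω)
    (r L : ℝ) (hL : 0 < L) (hr : 0 ≤ r)
    (hdiam : ∀ w ∈ Ω, ∀ w' ∈ Ω, ‖w - w'‖ ≤ r)
    (T : ℕ)
    (f : ℕ → EuclideanSpace ℝ (Fin d) → ℝ)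
    (f' : ℕ → EuclideanSpace ℝ (Fin d) → EuclideanSpace ℝ (Fin d))
    (w ws : ℕ → EuclideanSpace ℝ (Fin d))
    (hgrad : ∀ t ∈ Finset.Icc 1 T, ∀ x, HasGradientAt (f t) (f' t x) x)
    (hconv : ∀ t ∈ Finset.Icc 1 T, ConvexOn ℝ Set.univ (f t))
    (hsmooth : ∀ t ∈ Finset.Icc 1 T, ∀ x y, ‖f' t x - f' t y‖ ≤ L * ‖x - y‖)
    (hwsΩ : ∀ t ∈ Finset.Icc 1 T, ws t ∈ Ω)
    (hvanish : ∀ t ∈ Finset.Icc 1 T, f' t (ws t) = 0)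
    (hw1 : w 1 ∈ Ω)
    (hprojmem : ∀ t ∈ Finset.Icc 1 T, w (t + 1) ∈ Ω)
    (hproj : ∀ t ∈ Finset.Icc 1 T, ∀ y ∈ Ω,
      ‖w (t + 1) - (w t - (1 / (2 * L)) • f' t (w t))‖
        ≤ ‖y - (w t - (1 / (2 * L)) • f' t (w t))‖) :
    ∑ t ∈ Finset.Icc 1 T, (f t (w t) - f t (ws t))
      ≤ 2 * L * (r ^ 2 + 2 * r * ∑ t ∈ Finset.Icc 1 (T - 1), ‖ws t - ws (t + 1)‖) := by
  rcases Nat.eq_zero_or_pos T with rfl | hT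
  · simp only [zero_tsub, show Icc 1 0 = ∅ by rfl, sum_empty]
    positivity
  have hstep : ∀ t ∈ Icc 1 T, f t (w t) - f t (ws t)
      ≤ 2 * L * (‖w t - ws t‖ ^ 2 - ‖w (t + 1) - ws t‖ ^ 2) := fun t ht =>
    sub_le_of_projected_gradient_step hL (hgrad t ht) (hconv t ht) (hsmooth t ht) hΩconv
      (hwsΩ t ht) (hvanish t ht) (hprojmem t ht) (isMinOn_iff.2 (hproj t ht))
  have hstart : ‖w 1 - ws 1‖ ^ 2 ≤ r ^ 2 := by
    gcongr
    exact hdiam _ hw1 _ (hwsΩ 1 (left_mem_Icc.2 hT))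
  have hdrift : ∀ t ∈ Icc 1 (T - 1),
      ‖w (t + 1) - ws (t + 1)‖ ^ 2 - ‖w (t + 1) - ws t‖ ^ 2 ≤ 2 * r * ‖ws t - ws (t + 1)‖ := by
    intro t ht
    have ht' : t ∈ Icc 1 T := Icc_subset_Icc_right (Nat.sub_le T 1) ht
    have ht'' : t + 1 ∈ Icc 1 T := by simp only [mem_Icc] at ht ⊢; omega
    exact sq_norm_sub_sub_sq_norm_sub_le (hdiam _ (hprojmem t ht') _ (hwsΩ _ ht''))
      (hdiam _ (hprojmem t ht') _ (hwsΩ t ht'))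
  calc ∑ t ∈ Icc 1 T, (f t (w t) - f t (ws t))
      ≤ ∑ t ∈ Icc 1 T, 2 * L * (‖w t - ws t‖ ^ 2 - ‖w (t + 1) - ws t‖ ^ 2) := sum_le_sum hstep
    _ = 2 * L * (‖w 1 - ws 1‖ ^ 2 - ‖w (T + 1) - ws T‖ ^ 2 + ∑ t ∈ Icc 1 (T - 1),
          (‖w (t + 1) - ws (t + 1)‖ ^ 2 - ‖w (t + 1) - ws t‖ ^ 2)) := by
        rw [← mul_sum, sum_Icc_sub_eq _ _ hT]
    _ ≤ 2 * L * (r ^ 2 + 2 * r * ∑ t ∈ Icc 1 (T - 1), ‖ws t - ws (t + 1)‖) := by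
        rw [mul_sum]
        gcongr
        · linarith [sq_nonneg ‖w (T + 1) - ws T‖]
        · exact hdrift _ ‹_›

/-- Theorem 1 (upper bound): OGD with step size `1/(2L)` on convex `L`-smooth losses
with vanishing gradients achieves dynamic regret at most `2L(r² + 2r·V_T^p)`. -/
theorem stmt3 {d : ℕ} (Ω : Set (EuclideanSpace ℝ (Fin d)))
    (hΩconv : Convex ℝ Ω) (hΩclosed : IsClosed Ω) (hΩne : Ω.Nonempty)
    (r L : ℝ) (hL : 0 < L) (hr : 0 ≤ r)
    (hdiam : ∀ w ∈ Ω, ∀ w' ∈ Ω, ‖w - w'‖ ≤ r)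
    (T : ℕ)
    (f : ℕ → EuclideanSpace ℝ (Fin d) → ℝ)
    (f' : ℕ → EuclideanSpace ℝ (Fin d) → EuclideanSpace ℝ (Fin d))
    (w ws : ℕ → EuclideanSpace ℝ (Fin d))
    (hgrad : ∀ t ∈ Finset.Icc 1 T, ∀ x, HasGradientAt (f t) (f' t x) x)
    (hconv : ∀ t ∈ Finset.Icc 1 T, ConvexOn ℝ Set.univ (f t))
    (hsmooth : ∀ t ∈ Finset.Icc 1 T, ∀ x y, ‖f' t x - f' t y‖ ≤ L * ‖x - y‖)
    (hwsΩ : ∀ t ∈ Finset.Icc 1 T, ws t ∈ Ω)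
    (hmin : ∀ t ∈ Finset.Icc 1 T, ∀ y ∈ Ω, f t (ws t) ≤ f t y)
    (hvanish : ∀ t ∈ Finset.Icc 1 T, f' t (ws t) = 0)
    (hw1 : w 1 ∈ Ω)
    (hprojmem : ∀ t ∈ Finset.Icc 1 T, w (t + 1) ∈ Ω)
    (hproj : ∀ t ∈ Finset.Icc 1 T, ∀ y ∈ Ω,
      ‖w (t + 1) - (w t - (1 / (2 * L)) • f' t (w t))‖
        ≤ ‖y - (w t - (1 / (2 * L)) • f' t (w t))‖) :
    ∑ t ∈ Finset.Icc 1 T, (f t (w t) - f t (ws t))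
      ≤ 2 * L * (r ^ 2 + 2 * r * ∑ t ∈ Finset.Icc 1 (T - 1), ‖ws t - ws (t + 1)‖) :=
  stmt3_general Ω hΩconv r L hL hr hdiam T f f' w ws hgrad hconv hsmooth hwsΩ hvanish hw1 hprojmem
    hproj
end
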